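/- arXiv:2410.00726 — 6 statements merged into one kernel-verified Lean document; each statement's English description precedes it below -/
import Mathlib

section
/- For any LTLf formula Φ in negation normal form, its Tail Normal Form tnf(Φ) = tnft(Φ) ∧ F(Tail) is equivalent to Φ: for every finite trace (over propositional valuations extended with a fresh atom Tail that holds exactly at the last position), the trace satisfies Φ if and only if it satisfies tnf(Φ). -/
/-- LTLf formulas in negation normal form: literals, ⊤, ⊥, ∧, ∨,
strong next `X`, weak next `N`, until `U`, release `R`. -/
inductive LTLf (α : Type) where
  | tt : LTLf α
  | ff : LTLf α
  | atom : α → LTLf α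
  | natom : α → LTLf α
  | and : LTLf α → LTLf α → LTLf α
  | or : LTLf α → LTLf α → LTLf α
  | X : LTLf α → LTLf α
  | N : LTLf α → LTLf α
  | U : LTLf α → LTLf α → LTLf α
  | R : LTLf α → LTLf α → LTLf α

/-- Finite-trace semantics of LTLf at position `i` of the trace `σ`
(a finite sequence of states, i.e. sets of atoms). -/
def Sat {α : Type} (σ : List (Set α)) : ℕ → LTLf α → Prop
  | _, .tt => True
  | _, .ff => False
  | i, .atom a => a ∈ σ.getD i ∅
  | i, .natom a => a ∉ σ.getD i ∅
  | i, .and φ ψ => Sat σ i φ ∧ Sat σ i ψ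
  | i, .or φ ψ => Sat σ i φ ∨ Sat σ i ψ
  | i, .X φ => i + 1 < σ.length ∧ Sat σ (i + 1) φ
  | i, .N φ => i + 1 = σ.length ∨ (i + 1 < σ.length ∧ Sat σ (i + 1) φ)
  | i, .U φ ψ => ∃ j, i ≤ j ∧ j < σ.length ∧ Sat σ j ψ ∧ ∀ k, i ≤ k → k < j → Sat σ k φ
  | i, .R φ ψ => (∀ j, i ≤ j → j < σ.length → Sat σ j ψ) ∨
      (∃ j, i ≤ j ∧ j < σ.length ∧ Sat σ j φ ∧ ∀ k, i ≤ k → k ≤ j → Sat σ k ψ)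

/-- `tnft`: the recursive part of the Tail Normal Form.  The fresh atom `Tail`
is represented by `none` in `Option α`. -/
def tnft {α : Type} : LTLf α → LTLf (Option α)
  | .tt => .tt
  | .ff => .ff
  | .atom a => .atom (some a)
  | .natom a => .natom (some a)
  | .and φ ψ => .and (tnft φ) (tnft ψ)
  | .or φ ψ => .or (tnft φ) (tnft ψ)
  | .X φ => .and (.natom none) (.X (tnft φ))
  | .N φ => .or (.atom none) (.X (tnft φ))
  | .U φ ψ => .U (.and (.natom none) (tnft φ)) (tnft ψ)
  | .R φ ψ => .R (.or (.atom none) (tnft φ)) (tnft ψ)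

/-- Tail Normal Form: `tnf(Φ) = tnft(Φ) ∧ F Tail`, where `F Tail = ⊤ U Tail`. -/
def tnf {α : Type} (Φ : LTLf α) : LTLf (Option α) :=
  .and (tnft Φ) (.U .tt (.atom none))

/-- Extend a trace over `α` to a trace over `Option α` in which the fresh
atom `Tail` (i.e. `none`) holds exactly at the last position. -/
def extendTail {α : Type} (σ : List (Set α)) : List (Set (Option α)) :=
  σ.mapIdx fun i s =>
    {x : Option α | (x = none ∧ i + 1 = σ.length) ∨ ∃ a, x = some a ∧ a ∈ s}


lemma extendTail_length {α : Type} (σ : List (Set α)) :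
    (extendTail σ).length = σ.length := by simp [extendTail]

lemma mem_extendTail_none {α : Type} (σ : List (Set α)) (i : ℕ) :
    (none ∈ (extendTail σ).getD i ∅) ↔ (i < σ.length ∧ i + 1 = σ.length) := by
  by_cases h : i < σ.length
  · rw [List.getD_eq_getElem _ _ (by simpa [extendTail_length] using h)]
    simp [extendTail, h]
  · rw [List.getD_eq_default _ _ (by simp [extendTail_length]; omega)]
    simp [h]

lemma mem_extendTail_some {α : Type} (σ : List (Set α)) (a : α) (i : ℕ) :
    (some a ∈ (extendTail σ).getD i ∅) ↔ a ∈ σ.getD i ∅ := by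
  by_cases h : i < σ.length
  · rw [List.getD_eq_getElem _ _ (by simpa [extendTail_length] using h),
      List.getD_eq_getElem _ _ h]
    simp [extendTail, h]
  · rw [List.getD_eq_default _ _ (by simp [extendTail_length]; omega),
      List.getD_eq_default _ _ (by omega)]
    simp

lemma tnft_equiv {α : Type} (Φ : LTLf α) (σ : List (Set α)) :
    ∀ i, Sat σ i Φ ↔ Sat (extendTail σ) i (tnft Φ) := by
  induction Φ with
  | tt => intro i; simp [Sat, tnft]
  | ff => intro i; simp [Sat, tnft]
  | atom a => intro i; exact (mem_extendTail_some σ a i).symm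
  | natom a => intro i; exact not_congr (mem_extendTail_some σ a i).symm
  | and φ ψ ihφ ihψ => intro i; simp [Sat, tnft, ihφ i, ihψ i]
  | or φ ψ ihφ ihψ => intro i; simp [Sat, tnft, ihφ i, ihψ i]
  | X φ ih =>
    intro i
    simp only [Sat, tnft, extendTail_length, mem_extendTail_none, ← ih (i + 1)]
    constructor
    · rintro ⟨h1, h2⟩; exact ⟨by omega, h1, h2⟩
    · rintro ⟨_, h1, h2⟩; exact ⟨h1, h2⟩
  | N φ ih =>
    intro i
    simp only [Sat, tnft, extendTail_length, mem_extendTail_none, ← ih (i + 1)]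
    constructor
    · rintro (h | ⟨h1, h2⟩)
      · exact Or.inl ⟨by omega, h⟩
      · exact Or.inr ⟨h1, h2⟩
    · rintro (⟨_, h⟩ | ⟨h1, h2⟩)
      · exact Or.inl h
      · exact Or.inr ⟨h1, h2⟩
  | U φ ψ ihφ ihψ =>
    intro i
    simp only [Sat, tnft, extendTail_length, mem_extendTail_none]
    constructor
    · rintro ⟨j, hij, hjl, hψ, hφ⟩
      refine ⟨j, hij, hjl, (ihψ j).1 hψ, fun k hik hkj => ⟨by omega, (ihφ k).1 (hφ k hik hkj)⟩⟩
    · rintro ⟨j, hij, hjl, hψ, hφ⟩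
      exact ⟨j, hij, hjl, (ihψ j).2 hψ, fun k hik hkj => (ihφ k).2 (hφ k hik hkj).2⟩
  | R φ ψ ihφ ihψ =>
    intro i
    simp only [Sat, tnft, extendTail_length, mem_extendTail_none]
    constructor
    · rintro (h | ⟨j, hij, hjl, hφ, hψ⟩)
      · exact Or.inl fun j hij hjl => (ihψ j).1 (h j hij hjl)
      · exact Or.inr ⟨j, hij, hjl, Or.inr ((ihφ j).1 hφ),
          fun k hik hkj => (ihψ k).1 (hψ k hik hkj)⟩
    · rintro (h | ⟨j, hij, hjl, (⟨_, hj⟩ | hφ), hψ⟩)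
      · exact Or.inl fun j hij hjl => (ihψ j).2 (h j hij hjl)
      · refine Or.inl fun k hik hkl => (ihψ k).2 (hψ k hik (by omega))
      · exact Or.inr ⟨j, hij, hjl, (ihφ j).2 hφ,
          fun k hik hkj => (ihψ k).2 (hψ k hik hkj)⟩

/-- For every LTLf formula `Φ` in NNF and every nonempty finite
trace `σ`, `σ` satisfies `Φ` iff the Tail-extended trace satisfies `tnf Φ`. -/
theorem tnf_equiv {α : Type} (Φ : LTLf α) (σ : List (Set α)) (hσ : σ ≠ []) :
    Sat σ 0 Φ ↔ Sat (extendTail σ) 0 (tnf Φ) := by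
  have hlen : 0 < σ.length := List.length_pos_iff.2 hσ
  simp only [tnf, Sat, tnft_equiv Φ σ 0]
  constructor
  · intro h
    refine ⟨h, σ.length - 1, by omega, by rw [extendTail_length]; omega, ?_, fun _ _ _ => trivial⟩
    show none ∈ _
    rw [mem_extendTail_none]
    omega
  · exact fun h => h.1
end

section
/- For any Golog program expression δ, any world w, any situation z, and any subprogram δ' reachable from δ: ⟨z,δ'⟩ can make a transition to ⟨z·α, δ''⟩ in w if and only if the characteristic graph has an edge δ' →(α,ψ) δ'' with w, z ⊨ ψ. -/
/-- Boolean combinations of atomic test conditions (`C²`-fluent sentences are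
abstracted as an arbitrary type `C` of conditions evaluated by a world and a
situation). -/
inductive BC (C : Type) where
  | tt : BC C
  | ff : BC C
  | atom : C → BC C
  | and : BC C → BC C → BC C
  | or : BC C → BC C → BC C

/-- Evaluation of a condition in world `w` at situation (action trace) `z`;
`ev` evaluates the atomic conditions. -/
def evalBC {C A W : Type} (ev : W → List A → C → Prop) (w : W) (z : List A) :
    BC C → Prop
  | .tt => True
  | .ff => False
  | .atom c => ev w z c
  | .and p q => evalBC ev w z p ∧ evalBC ev w z q
  | .or p q => evalBC ev w z p ∨ evalBC ev w z q

/-- Golog program expressions: ground actions, tests, sequence,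
nondeterministic choice, interleaving, and iteration. -/
inductive Prog (C A : Type) where
  | act : A → Prog C A
  | test : BC C → Prog C A
  | seq : Prog C A → Prog C A → Prog C A
  | choice : Prog C A → Prog C A → Prog C A
  | par : Prog C A → Prog C A → Prog C A
  | star : Prog C A → Prog C A

/-- The empty program `nil = ⊤?`. -/
def Prog.nil {C A : Type} : Prog C A := .test .tt

/-- `⟨z, δ⟩` is a final configuration in world `w`. -/
def Final {C A W : Type} (ev : W → List A → C → Prop) (w : W) (z : List A) :
    Prog C A → Prop
  | .act _ => False
  | .test φ => evalBC ev w z φ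
  | .seq p q => Final ev w z p ∧ Final ev w z q
  | .choice p q => Final ev w z p ∨ Final ev w z q
  | .par p q => Final ev w z p ∧ Final ev w z q
  | .star _ => True

/-- Single-step program transition semantics:
`Step ev w z δ a δ'` means `⟨z, δ⟩ →_w ⟨z·a, δ'⟩`. -/
inductive Step {C A W : Type} (ev : W → List A → C → Prop) (w : W) :
    List A → Prog C A → A → Prog C A → Prop
  | act (z : List A) (a : A) : Step ev w z (.act a) a .nil
  | seqL {z p a p'} (q) : Step ev w z p a p' → Step ev w z (.seq p q) a (.seq p' q)
  | seqR {z q a q'} (p) : Final ev w z p → Step ev w z q a q' →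
      Step ev w z (.seq p q) a q'
  | chL {z p a p'} (q) : Step ev w z p a p' → Step ev w z (.choice p q) a p'
  | chR {z q a q'} (p) : Step ev w z q a q' → Step ev w z (.choice p q) a q'
  | parL {z p a p'} (q) : Step ev w z p a p' → Step ev w z (.par p q) a (.par p' q)
  | parR {z q a q'} (p) : Step ev w z q a q' → Step ev w z (.par p q) a (.par p q')
  | star {z p a p'} : Step ev w z p a p' →
      Step ev w z (.star p) a (.seq p' (.star p))

/-- The syntactic termination condition `φ(δ)` of the characteristic-graph
construction. -/
def tc {C A : Type} : Prog C A → BC C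
  | .act _ => .ff
  | .test φ => φ
  | .seq p q => .and (tc p) (tc q)
  | .choice p q => .or (tc p) (tc q)
  | .par p q => .and (tc p) (tc q)
  | .star _ => .tt

/-- Edges of the characteristic graph: `CEdge δ a ψ δ'` means
`δ →(a,ψ) δ'`, defined purely syntactically. -/
inductive CEdge {C A : Type} : Prog C A → A → BC C → Prog C A → Prop
  | act (a : A) : CEdge (.act a) a .tt .nil
  | seqL {p a ψ p'} (q) : CEdge p a ψ p' → CEdge (.seq p q) a ψ (.seq p' q)
  | seqR {q a ψ q'} (p) : CEdge q a ψ q' → CEdge (.seq p q) a (.and (tc p) ψ) q'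
  | chL {p a ψ p'} (q) : CEdge p a ψ p' → CEdge (.choice p q) a ψ p'
  | chR {q a ψ q'} (p) : CEdge q a ψ q' → CEdge (.choice p q) a ψ q'
  | parL {p a ψ p'} (q) : CEdge p a ψ p' → CEdge (.par p q) a ψ (.par p' q)
  | parR {q a ψ q'} (p) : CEdge q a ψ q' → CEdge (.par p q) a ψ (.par p q')
  | star {p a ψ p'} : CEdge p a ψ p' → CEdge (.star p) a ψ (.seq p' (.star p))

/-- `Reach δ δ'`: the subprogram `δ'` is reachable from `δ` via
characteristic-graph edges (so `sub δ = {δ' | Reach δ δ'}`). -/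
inductive Reach {C A : Type} : Prog C A → Prog C A → Prop
  | refl (p : Prog C A) : Reach p p
  | tail {p q a ψ r} : Reach p q → CEdge q a ψ r → Reach p r

lemma final_iff_tc {C A W : Type} (ev : W → List A → C → Prop) (w : W)
    (z : List A) (p : Prog C A) : Final ev w z p ↔ evalBC ev w z (tc p) := by
  induction p with
  | act a => simp [Final, tc, evalBC]
  | test φ => simp [Final, tc]
  | seq p q ih1 ih2 => simp [Final, tc, evalBC, ih1, ih2]
  | choice p q ih1 ih2 => simp [Final, tc, evalBC, ih1, ih2]
  | par p q ih1 ih2 => simp [Final, tc, evalBC, ih1, ih2]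
  | star p ih => simp [Final, tc, evalBC]

/-- For any program expression `δ`, world `w`, situation `z`,
and subprogram `δ'` reachable from `δ`: `⟨z, δ'⟩` can make a transition to
`⟨z·a, δ''⟩` in `w` iff the characteristic graph has an edge `δ' →(a,ψ) δ''`
whose guard `ψ` holds at `w, z`. -/
theorem step_iff_characteristic_edge {C A W : Type}
    (ev : W → List A → C → Prop) (δ : Prog C A) (w : W) (z : List A)
    (δ' δ'' : Prog C A) (a : A) (hreach : Reach δ δ') :
    Step ev w z δ' a δ'' ↔ ∃ ψ, CEdge δ' a ψ δ'' ∧ evalBC ev w z ψ := by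
  constructor
  · intro h
    clear hreach
    induction h with
    | act => exact ⟨.tt, .act _, trivial⟩
    | seqL q _ ih =>
        obtain ⟨ψ, he, hv⟩ := ih
        exact ⟨ψ, .seqL q he, hv⟩
    | seqR p hf _ ih =>
        obtain ⟨ψ, he, hv⟩ := ih
        exact ⟨.and (tc p) ψ, .seqR p he, (final_iff_tc ev w z p).1 hf, hv⟩
    | chL q _ ih => obtain ⟨ψ, he, hv⟩ := ih; exact ⟨ψ, .chL q he, hv⟩
    | chR p _ ih => obtain ⟨ψ, he, hv⟩ := ih; exact ⟨ψ, .chR p he, hv⟩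
    | parL q _ ih => obtain ⟨ψ, he, hv⟩ := ih; exact ⟨ψ, .parL q he, hv⟩
    | parR p _ ih => obtain ⟨ψ, he, hv⟩ := ih; exact ⟨ψ, .parR p he, hv⟩
    | star _ ih => obtain ⟨ψ, he, hv⟩ := ih; exact ⟨ψ, .star he, hv⟩
  · rintro ⟨ψ, he, hv⟩
    clear hreach
    induction he with
    | act a => exact .act z a
    | seqL q _ ih => exact .seqL q (ih hv)
    | seqR p _ ih =>
        exact .seqR p ((final_iff_tc ev w z p).2 hv.1) (ih hv.2)
    | chL q _ ih => exact .chL q (ih hv)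
    | chR p _ ih => exact .chR p (ih hv)
    | parL q _ ih => exact .parL q (ih hv)
    | parR p _ ih => exact .parR p (ih hv)
    | star _ ih => exact .star (ih hv)
end

section
/- The characteristic graph of any program expression δ is finite, i.e., the set sub(δ) of subprograms reachable via characteristic-graph edges from δ is a finite set. -/
/-- A syntactic finite overapproximation of the reachable subprograms. -/
def subs {C A : Type} : Prog C A → Set (Prog C A)
  | .act a => {.act a, Prog.nil}
  | .test φ => {.test φ}
  | .seq p q => (fun p' => Prog.seq p' q) '' subs p ∪ subs q
  | .choice p q => insert (.choice p q) (subs p ∪ subs q)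
  | .par p q => Set.image2 .par (subs p) (subs q)
  | .star p => insert (.star p) ((fun p' => Prog.seq p' (.star p)) '' subs p)

lemma subs_self {C A : Type} (δ : Prog C A) : δ ∈ subs δ := by
  induction δ <;> simp [subs, Prog.nil, Set.mem_image2] <;> tauto

lemma subs_closed {C A : Type} :
    ∀ (δ ρ : Prog C A), ρ ∈ subs δ → ∀ {a ψ ρ'}, CEdge ρ a ψ ρ' → ρ' ∈ subs δ := by
  intro δ
  induction δ with
  | act a =>
    intro ρ hρ a' ψ ρ' h
    rcases hρ with rfl | hρ
    · cases h; simp [subs]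
    · simp only [Set.mem_singleton_iff] at hρ; subst hρ; cases h
  | test φ =>
    intro ρ hρ a' ψ ρ' h
    simp only [subs, Set.mem_singleton_iff] at hρ; subst hρ; cases h
  | seq p q ihp ihq =>
    intro ρ hρ a' ψ ρ' h
    rcases hρ with ⟨p', hp', rfl⟩ | hρ
    · cases h with
      | seqL q h => exact Or.inl ⟨_, ihp _ hp' h, rfl⟩
      | seqR p h => exact Or.inr (ihq _ (subs_self q) h)
    · exact Or.inr (ihq _ hρ h)
  | choice p q ihp ihq =>
    intro ρ hρ a' ψ ρ' h
    rcases hρ with rfl | hρ | hρ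
    · cases h with
      | chL q h => exact Or.inr (Or.inl (ihp _ (subs_self p) h))
      | chR p h => exact Or.inr (Or.inr (ihq _ (subs_self q) h))
    · exact Or.inr (Or.inl (ihp _ hρ h))
    · exact Or.inr (Or.inr (ihq _ hρ h))
  | par p q ihp ihq =>
    intro ρ hρ a' ψ ρ' h
    rcases hρ with ⟨p', hp', q', hq', rfl⟩
    cases h with
    | parL q h => exact ⟨_, ihp _ hp' h, _, hq', rfl⟩
    | parR p h => exact ⟨_, hp', _, ihq _ hq' h, rfl⟩
  | star p ihp =>
    intro ρ hρ a' ψ ρ' h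
    rcases hρ with rfl | ⟨p', hp', rfl⟩
    · cases h with
      | star h => exact Or.inr ⟨_, ihp _ (subs_self p) h, rfl⟩
    · cases h with
      | seqL q h => exact Or.inr ⟨_, ihp _ hp' h, rfl⟩
      | seqR p h =>
        cases h with
        | star h => exact Or.inr ⟨_, ihp _ (subs_self p) h, rfl⟩

lemma subs_finite {C A : Type} (δ : Prog C A) : (subs δ).Finite := by
  induction δ with
  | act a => exact (Set.finite_singleton _).insert _
  | test φ => exact Set.finite_singleton _
  | seq p q ihp ihq => exact (ihp.image _).union ihq
  | choice p q ihp ihq => exact ((ihp.union ihq)).insert _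
  | par p q ihp ihq => exact Set.Finite.image2 _ ihp ihq
  | star p ihp => exact (ihp.image _).insert _

/-- The characteristic graph of any program expression `δ` is
finite: the set `sub δ` of subprograms reachable from `δ` via
characteristic-graph edges is a finite set. -/
theorem characteristic_graph_finite {C A : Type} (δ : Prog C A) :
    {ρ : Prog C A | Reach δ ρ}.Finite := by
  apply (subs_finite δ).subset
  intro ρ hρ
  induction hρ with
  | refl => exact subs_self δ
  | tail _ e ih => exact subs_closed δ _ ih e
end

section
/- If in the characteristic graph of a program δ every ground action α labels at most one outgoing edge of every node, then δ is situation-determined: for all worlds w satisfying the action theory, whenever ⟨z,δ⟩ reaches both ⟨z',δ'⟩ and ⟨z',δ''⟩ via the reflexive-transitive closure of the transition relation, δ' = δ''. -/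
/-- Reflexive-transitive closure of the transition relation on
configurations: `Steps ev w z δ z' δ'` means `⟨z, δ⟩ →*_w ⟨z', δ'⟩`. -/
inductive Steps {C A W : Type} (ev : W → List A → C → Prop) (w : W) :
    List A → Prog C A → List A → Prog C A → Prop
  | refl (z : List A) (p : Prog C A) : Steps ev w z p z p
  | step {z p a p' z' p''} : Step ev w z p a p' →
      Steps ev w (z ++ [a]) p' z' p'' → Steps ev w z p z' p''

lemma step_to_edge {C A W : Type} {ev : W → List A → C → Prop} {w : W}
    {z : List A} {p : Prog C A} {a : A} {p' : Prog C A}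
    (h : Step ev w z p a p') : ∃ ψ, CEdge p a ψ p' := by
  induction h with
  | act => exact ⟨_, CEdge.act _⟩
  | seqL q _ ih => obtain ⟨ψ, hψ⟩ := ih; exact ⟨ψ, CEdge.seqL q hψ⟩
  | seqR p _ _ ih => obtain ⟨ψ, hψ⟩ := ih; exact ⟨_, CEdge.seqR p hψ⟩
  | chL q _ ih => obtain ⟨ψ, hψ⟩ := ih; exact ⟨ψ, CEdge.chL q hψ⟩
  | chR p _ ih => obtain ⟨ψ, hψ⟩ := ih; exact ⟨ψ, CEdge.chR p hψ⟩
  | parL q _ ih => obtain ⟨ψ, hψ⟩ := ih; exact ⟨ψ, CEdge.parL q hψ⟩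
  | parR p _ ih => obtain ⟨ψ, hψ⟩ := ih; exact ⟨ψ, CEdge.parR p hψ⟩
  | star _ ih => obtain ⟨ψ, hψ⟩ := ih; exact ⟨ψ, CEdge.star hψ⟩

lemma steps_extend {C A W : Type} {ev : W → List A → C → Prop} {w : W}
    {z : List A} {p : Prog C A} {z' : List A} {p' : Prog C A}
    (h : Steps ev w z p z' p') : ∃ l, z' = z ++ l := by
  induction h with
  | refl => exact ⟨[], by simp⟩
  | @step z p a p' z' p'' _ _ ih =>
    obtain ⟨l, hl⟩ := ih; exact ⟨a :: l, by simp [hl]⟩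

/-- If in the characteristic graph of `δ` every ground
action labels at most one outgoing edge of every node, then `δ` is
situation-determined: for every world satisfying the action theory `D`,
whenever `⟨z, δ⟩` reaches both `⟨z', δ'⟩` and `⟨z', δ''⟩`, then `δ' = δ''`. -/
theorem situation_determined_of_unique_edges {C A W : Type}
    (ev : W → List A → C → Prop) (D : W → Prop) (δ : Prog C A)
    (huniq : ∀ ρ, Reach δ ρ → ∀ (a : A) ψ₁ ρ₁ ψ₂ ρ₂,
      CEdge ρ a ψ₁ ρ₁ → CEdge ρ a ψ₂ ρ₂ → ψ₁ = ψ₂ ∧ ρ₁ = ρ₂) :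
    ∀ w, D w → ∀ (z z' : List A) (δ' δ'' : Prog C A),
      Steps ev w z δ z' δ' → Steps ev w z δ z' δ'' → δ' = δ'' := by
  intro w _ z z' δ' δ'' h1 h2
  have key : ∀ (z : List A) (ρ : Prog C A) (z' : List A) (δ' : Prog C A),
      Steps ev w z ρ z' δ' → Reach δ ρ → ∀ δ'' : Prog C A,
      Steps ev w z ρ z' δ'' → δ' = δ'' := by
    intro z ρ z' δ' h1
    induction h1 with
    | refl z p =>
      intro hreach δ'' h2
      cases h2 with
      | refl => rfl
      | step hs hrest =>
        obtain ⟨l, hl⟩ := steps_extend hrest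
        have := congrArg List.length hl
        simp at this
    | @step z p a p' z'' p'' hs hrest ih =>
      intro hreach δ'' h2
      cases h2 with
      | refl =>
        obtain ⟨l, hl⟩ := steps_extend hrest
        have := congrArg List.length hl
        simp at this
      | @step _ _ b ρ₂ _ _ hs2 hrest2 =>
        obtain ⟨l1, hl1⟩ := steps_extend hrest
        obtain ⟨l2, hl2⟩ := steps_extend hrest2
        have heq := hl1.symm.trans hl2
        simp only [List.append_assoc, List.singleton_append,
          List.append_cancel_left_eq, List.cons.injEq] at heq
        obtain ⟨hab, -⟩ := heq
        subst hab
        obtain ⟨ψ1, he1⟩ := step_to_edge hs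
        obtain ⟨ψ2, he2⟩ := step_to_edge hs2
        obtain ⟨-, hp⟩ := huniq p hreach a ψ1 p' ψ2 ρ₂ he1 he2
        subst hp
        exact ih (Reach.tail hreach he1) δ'' hrest2
  exact key z δ z' δ' h1 (Reach.refl δ) δ'' h2
end

section
/- Every execution trace of a policy is an execution trace of the underlying program: for every world w, the set of traces induced by a policy π is contained in the set of traces of the program δ, i.e., ‖π‖_w ⊆ ‖δ‖_w. -/
/-- A policy for the program `δ` with action theory `D` and environment
actions `AE`: a partial mapping (with domain `dom`) from worlds, traces and
remaining programs to sets of actions, satisfying the defining conditions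
(definedness on the initial configuration, applicability, definedness on
successors, inclusion of all applicable environment actions, and
non-blockingness). -/
structure Policy {C A W : Type} (ev : W → List A → C → Prop) (D : W → Prop)
    (AE : Set A) (δ : Prog C A) where
  dom : W → List A → Prog C A → Prop
  act : W → List A → Prog C A → Set A
  init_dom : ∀ w, D w → dom w [] δ
  applicable : ∀ w z ρ a, dom w z ρ → a ∈ act w z ρ → ∃ ρ', Step ev w z ρ a ρ'
  succ_dom : ∀ w z ρ a ρ', dom w z ρ → a ∈ act w z ρ → Step ev w z ρ a ρ' →
    dom w (z ++ [a]) ρ'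
  env_incl : ∀ w z ρ a, dom w z ρ → a ∈ AE → (∃ ρ', Step ev w z ρ a ρ') →
    a ∈ act w z ρ
  nonblocking : ∀ w z ρ, dom w z ρ → act w z ρ = ∅ → Final ev w z ρ

/-- Configurations reachable from `⟨⟨⟩, δ⟩` by following the policy. -/
inductive PConf {C A W : Type} {ev : W → List A → C → Prop} {D : W → Prop}
    {AE : Set A} {δ : Prog C A} (P : Policy ev D AE δ) (w : W) :
    List A → Prog C A → Prop
  | init : PConf P w [] δ
  | step {z ρ a ρ'} : PConf P w z ρ → a ∈ P.act w z ρ → Step ev w z ρ a ρ' →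
      PConf P w (z ++ [a]) ρ'

/-- The traces `‖π‖_w` induced by a policy in world `w`: policy-compatible
runs ending in a final configuration where the policy chooses only
environment actions. -/
def polTraces {C A W : Type} {ev : W → List A → C → Prop} {D : W → Prop}
    {AE : Set A} {δ : Prog C A} (P : Policy ev D AE δ) (w : W) :
    Set (List A) :=
  {z | ∃ ρ, PConf P w z ρ ∧ Final ev w z ρ ∧ P.act w z ρ ⊆ AE}

/-- Configurations reachable from `⟨⟨⟩, δ⟩` by the program semantics. -/
inductive Exec {C A W : Type} (ev : W → List A → C → Prop) (w : W)
    (δ : Prog C A) : List A → Prog C A → Prop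
  | init : Exec ev w δ [] δ
  | step {z ρ a ρ'} : Exec ev w δ z ρ → Step ev w z ρ a ρ' →
      Exec ev w δ (z ++ [a]) ρ'

/-- The traces `‖δ‖_w` of the program `δ` in world `w`: runs from the initial
configuration ending in a final configuration. -/
def progTraces {C A W : Type} (ev : W → List A → C → Prop) (w : W)
    (δ : Prog C A) : Set (List A) :=
  {z | ∃ ρ, Exec ev w δ z ρ ∧ Final ev w z ρ}

/-- Every execution trace of a policy is an execution trace
of the underlying program: `‖π‖_w ⊆ ‖δ‖_w` for every world `w`. -/
theorem polTraces_subset_progTraces {C A W : Type}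
    (ev : W → List A → C → Prop) (D : W → Prop) (AE : Set A) (δ : Prog C A)
    (P : Policy ev D AE δ) (w : W) :
    polTraces P w ⊆ progTraces ev w δ := by
  rintro z ⟨ρ, hc, hf, -⟩
  refine ⟨ρ, ?_, hf⟩
  clear hf
  induction hc with
  | init => exact Exec.init
  | step _ _ hs ih => exact Exec.step ih hs
end

section
/- Backward tracking of obligations: if a path s₀ →α₁ ⋯ →αₙ sₙ in the game arena starts at an initial state of type(w) and ends at an accepting state, then there is a sequence of obligation pairs (χ₀,θ₀), …, (χₙ,θₙ) with (χᵢ,θᵢ) ∈ Aᵢ for each i such that w, z[..i], z[i+1..] ⊨ ⋀_{Ψ ∈ χᵢ} X Ψ; in particular w, ⟨⟩, z ⊨ Φ. -/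
/-- Temporal (LTLf) formulas over atomic conditions `C` (abstracting
`C²`-fluent sentences), in NNF, with the special atom `Tail` (and its
negation) marking the last position of a trace. -/
inductive TF (C : Type) where
  | tt : TF C
  | ff : TF C
  | atom : C → TF C
  | natom : C → TF C
  | tail : TF C
  | ntail : TF C
  | and : TF C → TF C → TF C
  | or : TF C → TF C → TF C
  | X : TF C → TF C
  | U : TF C → TF C → TF C
  | R : TF C → TF C → TF C

/-- Satisfaction `w, z, z' ⊨ Φ` of a temporal formula in world `w`, where `z`
is the already-performed prefix and `z'` the remaining trace. -/
def TSat {C A W : Type} (ev : W → List A → C → Prop) (w : W) :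
    List A → List A → TF C → Prop
  | _, _, .tt => True
  | _, _, .ff => False
  | z, _, .atom c => ev w z c
  | z, _, .natom c => ¬ ev w z c
  | _, z', .tail => z' = []
  | _, z', .ntail => z' ≠ []
  | z, z', .and p q => TSat ev w z z' p ∧ TSat ev w z z' q
  | z, z', .or p q => TSat ev w z z' p ∨ TSat ev w z z' q
  | z, z', .X p => ∃ a z'', z' = a :: z'' ∧ TSat ev w (z ++ [a]) z'' p
  | z, z', .U p q => ∃ k, k ≤ z'.length ∧
      TSat ev w (z ++ z'.take k) (z'.drop k) q ∧
      ∀ i < k, TSat ev w (z ++ z'.take i) (z'.drop i) p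
  | z, z', .R p q => (∀ k ≤ z'.length, TSat ev w (z ++ z'.take k) (z'.drop k) q) ∨
      ∃ k, k ≤ z'.length ∧ TSat ev w (z ++ z'.take k) (z'.drop k) p ∧
        ∀ i ≤ k, TSat ev w (z ++ z'.take i) (z'.drop i) q

/-- neXt Normal Form of a temporal formula. -/
def xnfT {C : Type} : TF C → TF C
  | .tt => .tt
  | .ff => .ff
  | .atom c => .atom c
  | .natom c => .natom c
  | .tail => .tail
  | .ntail => .ntail
  | .and p q => .and (xnfT p) (xnfT q)
  | .or p q => .or (xnfT p) (xnfT q)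
  | .X p => .X p
  | .U p q => .or (xnfT q) (.and (xnfT p) (.X (.U p q)))
  | .R p q => .and (xnfT q) (.or (xnfT p) (.X (.R p q)))

/-- Propositional satisfaction of a temporal formula read propositionally:
temporal subformulas with outermost `X`, `U`, `R` and the atom `Tail` are
treated as propositional atoms. -/
def PSatT {C : Type} (P : TF C → Prop) : TF C → Prop
  | .tt => True
  | .ff => False
  | .atom c => P (.atom c)
  | .natom c => ¬ P (.atom c)
  | .tail => P .tail
  | .ntail => ¬ P .tail
  | .and p q => PSatT P p ∧ PSatT P q
  | .or p q => PSatT P p ∨ PSatT P q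
  | .X p => P (.X p)
  | .U p q => P (.U p q)
  | .R p q => P (.R p q)

/-- `X(P)`: the formulas appearing under a next operator in the assignment. -/
def Xof {C : Type} (P : TF C → Prop) : Set (TF C) := {p | P (.X p)}

/-- The game arena `T` for the Golog program `(D, δ)` and temporal formula
`Φ`, presented through its defining properties.  Its states abstract tuples
`(τ, E, A, ρ)`: `prog` gives the remaining program `ρ`, `ob` the set `A` of
pending obligations (pairs of a set `χ` of next-obligations and a `Tail`
flag `θ`), and `compat s w z` expresses that the world-trace pair `(w, z)`
is represented by the type and accumulated effects of `s`.  Transitions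
follow characteristic-graph edges whose guards hold in the state, and the
obligation sets are updated via propositional assignments of the XNF of the
pending obligations whose local literals hold in the state. -/
structure ArenaFor {C A W : Type} (ev : W → List A → C → Prop) (D : W → Prop)
    (δ : Prog C A) (Φ : TF C) where
  S : Type
  step : S → A → S → Prop
  ob : S → Set (Set (TF C) × Prop)
  prog : S → Prog C A
  compat : S → W → List A → Prop
  init : W → S
  init_prog : ∀ w, prog (init w) = δ
  init_compat : ∀ w, D w → compat (init w) w []
  compat_nonempty : ∀ s : S, ∃ w z, compat s w z
  compat_uniform : ∀ (s : S) w z w' z', compat s w z → compat s w' z' →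
    ∀ c, ev w z c ↔ ev w' z' c
  step_iff : ∀ (s : S) a s', step s a s' ↔
    ∃ ψ, CEdge (prog s) a ψ (prog s') ∧ ∀ w z, compat s w z → evalBC ev w z ψ
  step_compat : ∀ (s : S) a s' w z, step s a s' → compat s w z →
    compat s' w (z ++ [a])
  init_ob : ∀ w, D w → ∀ (χ : Set (TF C)) (θ : Prop),
    (χ, θ) ∈ ob (init w) ↔ ∃ P : TF C → Prop,
      PSatT P (xnfT Φ) ∧ (∀ c, P (.atom c) ↔ ev w [] c) ∧
      χ = Xof P ∧ (θ ↔ P .tail)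
  step_ob : ∀ (s : S) a s' w z, step s a s' → compat s' w z →
    ∀ (χ₂ : Set (TF C)) (θ₂ : Prop),
      (χ₂, θ₂) ∈ ob s' ↔ ∃ (χ₁ : Set (TF C)) (θ₁ : Prop) (P : TF C → Prop),
        (χ₁, θ₁) ∈ ob s ∧ ¬ θ₁ ∧
        (∀ p ∈ χ₁, PSatT P (xnfT p)) ∧ (∀ c, P (.atom c) ↔ ev w z c) ∧
        χ₂ = Xof P ∧ (θ₂ ↔ P .tail)

namespace ArenaFor

variable {C A W : Type} {ev : W → List A → C → Prop} {D : W → Prop}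
  {δ : Prog C A} {Φ : TF C}

/-- A state is final if its termination condition holds in it (i.e. for all
compatible world-trace pairs). -/
def IsFinal (T : ArenaFor ev D δ Φ) (s : T.S) : Prop :=
  ∀ w z, T.compat s w z → evalBC ev w z (tc (T.prog s))

/-- A state is accepting if `(∅, ⊤)` belongs to its obligation set. -/
def IsAccepting (T : ArenaFor ev D δ Φ) (s : T.S) : Prop :=
  ∃ θ : Prop, θ ∧ ((∅ : Set (TF C)), θ) ∈ T.ob s

/-- States of the arena reachable from an initial state. -/
inductive ReachS (T : ArenaFor ev D δ Φ) : T.S → Prop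
  | init {w} : D w → ReachS T (T.init w)
  | step {s a s'} : ReachS T s → T.step s a s' → ReachS T s'

end ArenaFor

/-- Key semantic lemma: if a propositional assignment `P` satisfies the XNF
of `p`, its atoms agree with the evaluation at the current position, its
`Tail` atom holds iff the remaining trace is empty, and all its `X`-atoms are
temporally satisfied, then `p` itself is temporally satisfied. -/
lemma psat_xnf_tsat {C A W : Type} (ev : W → List A → C → Prop) (w : W)
    (p : TF C) (P : TF C → Prop) (z z' : List A)
    (hat : ∀ c, P (.atom c) ↔ ev w z c)
    (htail : P .tail ↔ z' = [])
    (hX : ∀ q, P (.X q) → TSat ev w z z' (.X q))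
    (h : PSatT P (xnfT p)) : TSat ev w z z' p := by
  induction p with
  | tt => trivial
  | ff => exact h
  | atom c => exact (hat c).1 h
  | natom c => exact fun hc => h ((hat c).2 hc)
  | tail => exact htail.1 h
  | ntail => exact fun hc => h (htail.2 hc)
  | and p q ihp ihq => exact ⟨ihp h.1, ihq h.2⟩
  | or p q ihp ihq =>
    rcases h with h | h
    · exact Or.inl (ihp h)
    · exact Or.inr (ihq h)
  | X p _ => exact hX p h
  | U p q ihp ihq =>
    simp only [xnfT, PSatT] at h
    rcases h with hq | ⟨hp, hx⟩
    · exact ⟨0, Nat.zero_le _, by simpa using ihq hq,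
        fun i hi => absurd hi (Nat.not_lt_zero i)⟩
    · obtain ⟨a, z'', hz', hsat⟩ := hX _ hx
      obtain ⟨k, hk, hq2, hall⟩ := hsat
      subst hz'
      refine ⟨k + 1, by simpa using Nat.succ_le_succ hk, ?_, ?_⟩
      · simpa [List.append_assoc] using hq2
      · intro i hi
        match i with
        | 0 => simpa using ihp hp
        | j + 1 =>
          have := hall j (Nat.lt_of_succ_lt_succ hi)
          simpa [List.append_assoc] using this
  | R p q ihp ihq =>
    simp only [xnfT, PSatT] at h
    obtain ⟨hq, hrest⟩ := h
    have hqnow := ihq hq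
    rcases hrest with hp | hx
    · refine Or.inr ⟨0, Nat.zero_le _, by simpa using ihp hp, ?_⟩
      intro i hi
      interval_cases i
      simpa using hqnow
    · obtain ⟨a, z'', hz', hsat⟩ := hX _ hx
      subst hz'
      rcases hsat with hall | ⟨k, hk, hp2, hall⟩
      · refine Or.inl ?_
        intro k hk
        match k with
        | 0 => simpa using hqnow
        | j + 1 =>
          have := hall j (by simpa using Nat.le_of_succ_le_succ hk)
          simpa [List.append_assoc] using this
      · refine Or.inr ⟨k + 1, by simpa using Nat.succ_le_succ hk, ?_, ?_⟩
        · simpa [List.append_assoc] using hp2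
        · intro i hi
          match i with
          | 0 => simpa using hqnow
          | j + 1 =>
            have := hall j (Nat.le_of_succ_le_succ hi)
            simpa [List.append_assoc] using this

/-- Backward tracking of obligations: if a path
`s₀ →α₁ ⋯ →αₙ sₙ` of the game arena starts at the initial state for a world
`w ⊨ D` and ends in an accepting state, then there are obligation pairs
`(χᵢ, θᵢ) ∈ Aᵢ` with `w, z[..i], z[i+1..] ⊨ ⋀_{Ψ ∈ χᵢ} X Ψ` for every
`i ≤ n`; in particular `w, ⟨⟩, z ⊨ Φ`. -/
theorem backward_obligation_tracking {C A W : Type}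
    (ev : W → List A → C → Prop) (D : W → Prop) (δ : Prog C A) (Φ : TF C)
    (T : ArenaFor ev D δ Φ) (w : W) (hw : D w) (z : List A)
    (s : ℕ → T.S) (hs0 : s 0 = T.init w)
    (hpath : ∀ i, (hi : i < z.length) → T.step (s i) (z.get ⟨i, hi⟩) (s (i + 1)))
    (hacc : T.IsAccepting (s z.length)) :
    (∃ (χ : ℕ → Set (TF C)) (θ : ℕ → Prop), ∀ i ≤ z.length,
      (χ i, θ i) ∈ T.ob (s i) ∧
      ∀ p ∈ χ i, TSat ev w (z.take i) (z.drop i) (.X p)) ∧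
    TSat ev w [] z Φ := by
  -- compatibility along the path
  have hcompat : ∀ i, i ≤ z.length → T.compat (s i) w (z.take i) := by
    intro i
    induction i with
    | zero =>
      intro _
      simpa [hs0] using T.init_compat w hw
    | succ i ih =>
      intro hi
      have hi' : i < z.length := Nat.lt_of_succ_le hi
      have := T.step_compat (s i) (z.get ⟨i, hi'⟩) (s (i + 1)) w (z.take i)
        (hpath i hi') (ih (Nat.le_of_lt hi'))
      have htake : z.take (i + 1) = z.take i ++ [z.get ⟨i, hi'⟩] :=
        (List.take_concat_get' z i hi').symm
      rw [htake]
      exact this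
  -- backward induction on the distance to the end of the trace
  have main : ∀ d i, i + d = z.length →
      ∃ (χ : Set (TF C)) (θ : Prop), (χ, θ) ∈ T.ob (s i) ∧
        (θ ↔ z.drop i = []) ∧
        ∀ p ∈ χ, TSat ev w (z.take i) (z.drop i) (.X p) := by
    intro d
    induction d with
    | zero =>
      intro i hi
      simp only [Nat.add_zero] at hi
      subst hi
      obtain ⟨θ, hθ, hmem⟩ := hacc
      refine ⟨∅, θ, hmem, ⟨fun _ => by simp, fun _ => hθ⟩, ?_⟩
      intro p hp
      exact absurd hp (Set.notMem_empty p)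
    | succ d ih =>
      intro i hi
      have hi' : i < z.length := by omega
      obtain ⟨χ', θ', hmem', htail', hsat'⟩ := ih (i + 1) (by omega)
      have hstep := hpath i hi'
      have hc : T.compat (s (i + 1)) w (z.take (i + 1)) := hcompat (i + 1) hi'
      obtain ⟨χ, θ, P, hmem, hnθ, hPsat, hPat, hχ', hθ'⟩ :=
        (T.step_ob (s i) (z.get ⟨i, hi'⟩) (s (i + 1)) w (z.take (i + 1))
          hstep hc χ' θ').1 hmem'
      have hdrop : z.drop i = z.get ⟨i, hi'⟩ :: z.drop (i + 1) :=
        List.drop_eq_getElem_cons hi'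
      have htake : z.take (i + 1) = z.take i ++ [z.get ⟨i, hi'⟩] :=
        (List.take_concat_get' z i hi').symm
      refine ⟨χ, θ, hmem, ?_, ?_⟩
      · constructor
        · intro h; exact absurd h hnθ
        · intro h; rw [hdrop] at h; exact absurd h (List.cons_ne_nil _ _)
      · intro p hp
        refine ⟨z.get ⟨i, hi'⟩, z.drop (i + 1), hdrop, ?_⟩
        rw [← htake]
        refine psat_xnf_tsat ev w p P _ _ hPat ?_ ?_ (hPsat p hp)
        · rw [← hθ']; exact htail'
        · intro q hq
          exact hsat' q (hχ' ▸ hq)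
  obtain ⟨χ0, θ0, hmem0, htail0, hsat0⟩ := main z.length 0 (by omega)
  constructor
  · -- build the full sequences by choice
    have H : ∀ i, ∃ (χ : Set (TF C)) (θ : Prop), i ≤ z.length →
        (χ, θ) ∈ T.ob (s i) ∧
        ∀ p ∈ χ, TSat ev w (z.take i) (z.drop i) (.X p) := by
      intro i
      by_cases hi : i ≤ z.length
      · obtain ⟨χ, θ, h1, _, h3⟩ := main (z.length - i) i (by omega)
        exact ⟨χ, θ, fun _ => ⟨h1, h3⟩⟩
      · exact ⟨∅, True, fun h => absurd h hi⟩
    choose χ θ hχθ using H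
    exact ⟨χ, θ, fun i hi => hχθ i hi⟩
  · -- satisfaction of Φ
    rw [hs0] at hmem0
    obtain ⟨P, hPsat, hPat, hχ0, hθ0⟩ :=
      (T.init_ob w hw χ0 θ0).1 hmem0
    have := psat_xnf_tsat ev w Φ P [] z hPat
      (by rw [← hθ0]; simpa using htail0)
      (fun q hq => by simpa using hsat0 q (hχ0 ▸ hq)) hPsat
    exact this
end
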